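/- arXiv:1711.04604 — 2 statements merged into one kernel-verified Lean document; each statement's English description precedes it below -/
import Mathlib

section
/- Let H be a connected graph with an odd cycle transversal Z of size at most d. Then every minimal blocking set Y of H satisfies |Y| ≤ |Z| + 2 ≤ d + 2. -/
attribute [local instance] Classical.propDecidable

namespace VCKernel

variable {V : Type*} [Fintype V] [DecidableEq V]

/-- `S` is an independent set of `G`. -/
def IsIndep (G : SimpleGraph V) (S : Finset V) : Prop :=
  ∀ u ∈ S, ∀ v ∈ S, ¬ G.Adj u v

/-- Independence number of the subgraph of `G` induced on the vertex set `A`. -/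
noncomputable def alphaOn (G : SimpleGraph V) (A : Set V) : ℕ :=
  sSup {n | ∃ S : Finset V, ↑S ⊆ A ∧ IsIndep G S ∧ S.card = n}

/-- Independence number `α(G)`. -/
noncomputable def alpha (G : SimpleGraph V) : ℕ := alphaOn G Set.univ

/-- `Y` is a blocking set: deleting it decreases the independence number. -/
def IsBlocking (G : SimpleGraph V) (Y : Finset V) : Prop :=
  alphaOn G (Set.univ \ ↑Y) < alpha G

/-- `Y` is a minimal blocking set. -/
def IsMinBlocking (G : SimpleGraph V) (Y : Finset V) : Prop :=
  IsBlocking G Y ∧ ∀ Y' ⊂ Y, ¬ IsBlocking G Y'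

/-- Open neighborhood of the vertex set `X'` in `G`. -/
def nbhd (G : SimpleGraph V) (X' : Finset V) : Set V :=
  {v | ∃ u ∈ X', G.Adj u v}

/-- Number of conflicts induced by `X'` on the induced subgraph with vertex set `A`. -/
noncomputable def conf (G : SimpleGraph V) (A : Set V) (X' : Finset V) : ℕ :=
  alphaOn G A - alphaOn G (A \ nbhd G X')

/-- `C` is (the vertex set of) a connected component of the subgraph of `G`
induced on `A`. -/
def IsCompOf (G : SimpleGraph V) (A C : Set V) : Prop :=
  C ⊆ A ∧ (G.induce C).Connected ∧ ∀ u ∈ C, ∀ v ∈ A, G.Adj u v → v ∈ C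

/-- Feasible solution to the Independent Set LP of the subgraph induced on `A`. -/
def FeasISOn (G : SimpleGraph V) (A : Set V) (x : V → ℝ) : Prop :=
  (∀ v ∈ A, 0 ≤ x v ∧ x v ≤ 1) ∧
    ∀ u ∈ A, ∀ v ∈ A, G.Adj u v → x u + x v ≤ 1

/-- Half-integrality on `A`. -/
def HalfIntOn (A : Set V) (x : V → ℝ) : Prop :=
  ∀ v ∈ A, x v = 0 ∨ x v = 1/2 ∨ x v = 1

/-- Objective value of an LP solution on vertex set `A`. -/
noncomputable def weightOn (A : Set V) (x : V → ℝ) : ℝ :=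
  ∑ v, if v ∈ A then x v else 0

/-- `x` is an optimum half-integral solution to the Independent Set LP
of the subgraph induced on `A`. -/
def OptHIOn (G : SimpleGraph V) (A : Set V) (x : V → ℝ) : Prop :=
  FeasISOn G A x ∧ HalfIntOn A x ∧
    ∀ y : V → ℝ, FeasISOn G A y → HalfIntOn A y → weightOn A y ≤ weightOn A x

/-- Feasible solution to the Vertex Cover LP of `G`. -/
def FeasVC (G : SimpleGraph V) (x : V → ℝ) : Prop :=
  (∀ v, 0 ≤ x v ∧ x v ≤ 1) ∧ ∀ u v, G.Adj u v → 1 ≤ x u + x v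

/-- Optimum value of the Independent Set LP of `G`. -/
noncomputable def lpIS (G : SimpleGraph V) : ℝ :=
  sSup {w | ∃ x : V → ℝ, FeasISOn G Set.univ x ∧ w = ∑ v, x v}

/-- Optimum value of the Vertex Cover LP of `G`. -/
noncomputable def lpVC (G : SimpleGraph V) : ℝ :=
  sInf {w | ∃ x : V → ℝ, FeasVC G x ∧ w = ∑ v, x v}

/-- `C` is a vertex cover of `G`. -/
def IsVC (G : SimpleGraph V) (C : Finset V) : Prop :=
  ∀ u v, G.Adj u v → u ∈ C ∨ v ∈ C

/-- Vertex cover number of `G`. -/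
noncomputable def vcNum (G : SimpleGraph V) : ℕ :=
  sInf {n | ∃ C : Finset V, IsVC G C ∧ C.card = n}

/-- `Z` is a feedback vertex set of `G`. -/
def IsFVS (G : SimpleGraph V) (Z : Finset V) : Prop :=
  (G.induce ((↑Z : Set V)ᶜ)).IsAcyclic

/-- `Z` is an odd cycle transversal of `G`. -/
def IsOCT (G : SimpleGraph V) (Z : Finset V) : Prop :=
  (G.induce ((↑Z : Set V)ᶜ)).Colorable 2

/-- `G` is a `d`-quasi-forest: each connected component has a feedback
vertex set of size at most `d`. -/
def QuasiForest (G : SimpleGraph V) (d : ℕ) : Prop :=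
  ∀ C : Set V, IsCompOf G Set.univ C →
    ∃ Z : Finset V, Z.card ≤ d ∧ (G.induce (C \ ↑Z)).IsAcyclic

/-- `G` is `d`-quasi-bipartite: each connected component has an odd cycle
transversal of size at most `d`. -/
def QuasiBipartite (G : SimpleGraph V) (d : ℕ) : Prop :=
  ∀ C : Set V, IsCompOf G Set.univ C →
    ∃ Z : Finset V, Z.card ≤ d ∧ (G.induce (C \ ↑Z)).Colorable 2

/-- Feedback vertex set number of `G`. -/
noncomputable def fvsNum (G : SimpleGraph V) : ℕ :=
  sInf {n | ∃ Z : Finset V, IsFVS G Z ∧ Z.card = n}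

/-- Odd cycle transversal number of `G`. -/
noncomputable def octNum (G : SimpleGraph V) : ℕ :=
  sInf {n | ∃ Z : Finset V, IsOCT G Z ∧ Z.card = n}

/-- The subgraph of `G` induced on `A` has treedepth at most `k`
(elimination-forest characterization of treedepth). -/
def tdLE (G : SimpleGraph V) : ℕ → Set V → Prop
  | 0, A => A = ∅
  | (k+1), A => ∀ C : Set V, IsCompOf G A C → ∃ v ∈ C, tdLE G k (C \ {v})

section Aux

variable (G : SimpleGraph V)

lemma alphaSet_bddAbove (A : Set V) :
    BddAbove {n | ∃ S : Finset V, ↑S ⊆ A ∧ IsIndep G S ∧ S.card = n} := by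
  refine ⟨Fintype.card V, ?_⟩
  rintro n ⟨S, -, -, rfl⟩
  simpa using Finset.card_le_card (Finset.subset_univ S)

lemma le_alphaOn {A : Set V} {S : Finset V} (hS : ↑S ⊆ A) (hI : IsIndep G S) :
    S.card ≤ alphaOn G A :=
  le_csSup (alphaSet_bddAbove G A) ⟨S, hS, hI, rfl⟩

lemma alphaOn_spec (A : Set V) :
    ∃ S : Finset V, ↑S ⊆ A ∧ IsIndep G S ∧ S.card = alphaOn G A := by
  have hne : ({n | ∃ S : Finset V, ↑S ⊆ A ∧ IsIndep G S ∧ S.card = n}).Nonempty := by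
    refine ⟨0, ∅, by simp, ?_, by simp⟩
    intro u hu
    simp at hu
  have := Nat.sSup_mem hne (alphaSet_bddAbove G A)
  exact this

lemma card_le_alpha {S : Finset V} (hI : IsIndep G S) : S.card ≤ alpha G :=
  le_alphaOn G (Set.subset_univ _) hI

lemma indep_subset {S T : Finset V} (h : S ⊆ T) (hT : IsIndep G T) : IsIndep G S :=
  fun u hu v hv => hT u (h hu) v (h hv)

end Aux

/-- If `G` is connected with an odd cycle transversal `Z` of size at most `d`,
then every minimal blocking set `Y` satisfies `|Y| ≤ |Z| + 2 ≤ d + 2`. -/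
theorem stmt8 (G : SimpleGraph V) (d : ℕ) (Z Y : Finset V)
    (hconn : G.Connected) (hZ : IsOCT G Z) (hZd : Z.card ≤ d)
    (hY : IsMinBlocking G Y) :
    Y.card ≤ Z.card + 2 ∧ Z.card + 2 ≤ d + 2 := by
  refine ⟨?_, by omega⟩
  obtain ⟨hblock, hmin⟩ := hY
  -- Any independent set avoiding Y has size < alpha G.
  have hBLOCK : ∀ T : Finset V, IsIndep G T → (∀ v ∈ T, v ∉ Y) → T.card < alpha G := by
    intro T hT hTY
    have hsub : (↑T : Set V) ⊆ Set.univ \ ↑Y := by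
      intro v hv
      exact ⟨trivial, fun h => hTY v (by exact_mod_cast hv) (by exact_mod_cast h)⟩
    exact lt_of_le_of_lt (le_alphaOn G hsub hT) hblock
  -- for each y in Y, a maximum independent set meeting Y exactly in y
  have hmax : ∀ y ∈ Y, ∃ I : Finset V,
      IsIndep G I ∧ I.card = alpha G ∧ y ∈ I ∧ ∀ v ∈ I, v ∈ Y → v = y := by
    intro y hy
    have hss : Y.erase y ⊂ Y := Finset.erase_ssubset hy
    have hnb := hmin _ hss
    unfold IsBlocking at hnb
    push_neg at hnb
    obtain ⟨S, hS1, hS2, hS3⟩ := alphaOn_spec G (Set.univ \ ↑(Y.erase y))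
    have hSuniq : ∀ v ∈ S, v ∈ Y → v = y := by
      intro v hv hvY
      by_contra hne
      have : (v : V) ∈ (↑(Y.erase y) : Set V) := by
        simpa using And.intro hvY hne
      exact ((hS1 (by exact_mod_cast hv)).2) this
    have hSeq : S.card = alpha G := le_antisymm (card_le_alpha G hS2) (hS3 ▸ hnb)
    have hyS : y ∈ S := by
      by_contra hyS
      have : ∀ v ∈ S, v ∉ Y := fun v hv hvY => hyS (hSuniq v hv hvY ▸ hv)
      exact absurd hSeq (Nat.ne_of_lt (hBLOCK S hS2 this))
    exact ⟨S, hS2, hSeq, hyS, hSuniq⟩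
  choose! I hInd hIcard hIy hIuniq using hmax
  -- Y is nonempty
  have hYne : Y.Nonempty := by
    rcases Y.eq_empty_or_nonempty with h | h
    · exfalso
      obtain ⟨S, -, hS2, hS3⟩ := alphaOn_spec G Set.univ
      have hlt := hBLOCK S hS2 (by simp [h])
      have halpha : alphaOn G Set.univ = alpha G := rfl
      omega
    · exact h
  obtain ⟨y0, hy0⟩ := hYne
  -- the independent set J of size alpha - 1 avoiding Y
  have hI0 := hIy y0 hy0
  set J : Finset V := (I y0).erase y0 with hJdef
  have hJind : IsIndep G J := indep_subset G (Finset.erase_subset _ _) (hInd y0 hy0)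
  have hJcard : J.card + 1 = alpha G := by
    rw [hJdef, Finset.card_erase_of_mem hI0]
    have h1 : 1 ≤ (I y0).card := Finset.card_pos.mpr ⟨y0, hI0⟩
    have h2 := hIcard y0 hy0
    omega
  have hJY : ∀ v ∈ J, v ∉ Y := by
    intro v hv hvY
    rw [hJdef, Finset.mem_erase] at hv
    exact hv.1 (hIuniq y0 hy0 v hv.2 hvY)
  -- the two sides of the symmetric differences
  set Af : V → Finset V := fun y => I y \ J with hAfdef
  set Bf : V → Finset V := fun y => J \ I y with hBfdef
  have hAfI : ∀ y, Af y ⊆ I y := fun y => Finset.sdiff_subset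
  have hBfJ : ∀ y, Bf y ⊆ J := fun y => Finset.sdiff_subset
  have hAfJ : ∀ y, ∀ v ∈ Af y, v ∉ J := by
    intro y v hv
    exact (Finset.mem_sdiff.mp hv).2
  have hyAf : ∀ y ∈ Y, y ∈ Af y := by
    intro y hy
    exact Finset.mem_sdiff.mpr ⟨hIy y hy, fun h => hJY y h hy⟩
  -- P1 : J-neighbors of Af y lie in Bf y
  have P1 : ∀ y ∈ Y, ∀ w ∈ J, ∀ x ∈ Af y, G.Adj w x → w ∈ Bf y := by
    intro y hy w hw x hx hadj
    refine Finset.mem_sdiff.mpr ⟨hw, fun hwI => ?_⟩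
    exact hInd y hy w hwI x (hAfI y hx) hadj
  -- cardinalities
  have cardAB : ∀ y ∈ Y, (Af y).card = (Bf y).card + 1 := by
    intro y hy
    have h1 : (Af y).card + (I y ∩ J).card = (I y).card :=
      Finset.card_sdiff_add_card_inter (I y) J
    have h2 : (Bf y).card + (I y ∩ J).card = J.card := by
      have := Finset.card_sdiff_add_card_inter J (I y)
      rwa [Finset.inter_comm] at this
    have h3 := hIcard y hy
    omega
  -- P2 : the X-lemma
  have P2 : ∀ y ∈ Y, ∀ X ⊆ Af y, y ∉ X →
      X.card ≤ ((Bf y).filter (fun w => ∃ x ∈ X, G.Adj w x)).card := by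
    intro y hy X hXA hyX
    set N : Finset V := (Bf y).filter (fun w => ∃ x ∈ X, G.Adj w x) with hNdef
    have hNB : N ⊆ Bf y := Finset.filter_subset _ _
    have hNJ : N ⊆ J := fun w hw => hBfJ y (hNB hw)
    set T : Finset V := (J \ N) ∪ X with hTdef
    have hnoadj : ∀ u ∈ J \ N, ∀ v ∈ X, ¬ G.Adj u v := by
      intro u hu v hv hadj
      rw [Finset.mem_sdiff] at hu
      have huB := P1 y hy u hu.1 v (hXA hv) hadj
      exact hu.2 (Finset.mem_filter.mpr ⟨huB, v, hv, hadj⟩)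
    have hTind : IsIndep G T := by
      intro u hu v hv hadj
      rw [hTdef, Finset.mem_union] at hu hv
      rcases hu with hu | hu <;> rcases hv with hv | hv
      · exact hJind u (Finset.mem_sdiff.mp hu).1 v (Finset.mem_sdiff.mp hv).1 hadj
      · exact hnoadj u hu v hv hadj
      · exact hnoadj v hv u hu hadj.symm
      · exact hInd y hy u (hAfI y (hXA hu)) v (hAfI y (hXA hv)) hadj
    have hTY : ∀ v ∈ T, v ∉ Y := by
      intro v hv hvY
      rw [hTdef, Finset.mem_union] at hv
      rcases hv with hv | hv
      · exact hJY v (Finset.mem_sdiff.mp hv).1 hvY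
      · exact hyX ((hIuniq y hy v (hAfI y (hXA hv)) hvY) ▸ hv)
    have hdisj : Disjoint (J \ N) X := by
      rw [Finset.disjoint_right]
      intro a ha
      have := hAfJ y a (hXA ha)
      simp [Finset.mem_sdiff]
      intro haJ
      exact absurd haJ this
    have hTcard : T.card = (J.card - N.card) + X.card := by
      rw [hTdef, Finset.card_union_of_disjoint hdisj, Finset.card_sdiff_of_subset hNJ]
    have hTlt := hBLOCK T hTind hTY
    have hNle : N.card ≤ J.card := Finset.card_le_card hNJ
    omega
  -- the key induction
  have key : ∀ Y' : Finset V, Y' ⊆ Y →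
      (Y'.biUnion Bf).card + Y'.card ≤ (Y'.biUnion Af).card := by
    intro Y'
    induction Y' using Finset.induction_on with
    | empty => simp
    | @insert y Y' hyY' ih =>
      intro hsub
      have hyY : y ∈ Y := hsub (Finset.mem_insert_self _ _)
      have hY'Y : Y' ⊆ Y := fun a ha => hsub (Finset.mem_insert_of_mem ha)
      have ih' := ih hY'Y
      rw [Finset.biUnion_insert, Finset.biUnion_insert,
        Finset.card_insert_of_notMem hyY']
      set UA : Finset V := Y'.biUnion Af with hUAdef
      set UB : Finset V := Y'.biUnion Bf with hUBdef
      have e1 := Finset.card_union_add_card_inter (Af y) UA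
      have e2 := Finset.card_union_add_card_inter (Bf y) UB
      have e3 := cardAB y hyY
      have hyX : y ∉ Af y ∩ UA := by
        intro hmem
        obtain ⟨j, hjY', hyAj⟩ := Finset.mem_biUnion.mp (Finset.mem_inter.mp hmem).2
        have : y = j := hIuniq j (hY'Y hjY') y (hAfI j hyAj) hyY
        exact hyY' (this ▸ hjY')
      have e4' := P2 y hyY (Af y ∩ UA) Finset.inter_subset_left hyX
      have hNsub : (Bf y).filter (fun w => ∃ x ∈ Af y ∩ UA, G.Adj w x) ⊆ Bf y ∩ UB := by
        intro w hw
        rw [Finset.mem_filter] at hw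
        obtain ⟨hwB, x, hxX, hadj⟩ := hw
        obtain ⟨j, hjY', hxAj⟩ := Finset.mem_biUnion.mp (Finset.mem_inter.mp hxX).2
        have hwBj := P1 j (hY'Y hjY') w (hBfJ y hwB) x hxAj hadj
        exact Finset.mem_inter.mpr ⟨hwB, Finset.mem_biUnion.mpr ⟨j, hjY', hwBj⟩⟩
      have e4 : (Af y ∩ UA).card ≤ (Bf y ∩ UB).card :=
        le_trans e4' (Finset.card_le_card hNsub)
      omega
  have hkey := key Y (Finset.Subset.refl Y)
  set UA : Finset V := Y.biUnion Af with hUAdef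
  set UB : Finset V := Y.biUnion Bf with hUBdef
  have hUAJ : ∀ v ∈ UA, v ∉ J := by
    intro v hv
    obtain ⟨j, hj, hvA⟩ := Finset.mem_biUnion.mp hv
    exact hAfJ j v hvA
  have hUBJ : UB ⊆ J := by
    intro v hv
    obtain ⟨j, hj, hvB⟩ := Finset.mem_biUnion.mp hv
    exact hBfJ j hvB
  set F : Finset V := J \ UB with hFdef
  have hFcard : F.card + UB.card = J.card := Finset.card_sdiff_add_card_eq_card hUBJ
  set U : Finset V := UA ∪ UB with hUdef
  have hUdisj : Disjoint UA UB := by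
    rw [Finset.disjoint_left]
    intro a ha hab
    exact hUAJ a ha (hUBJ hab)
  have hUcard : U.card = UA.card + UB.card := Finset.card_union_of_disjoint hUdisj
  -- no edges between F and U
  have hFU : ∀ w ∈ F, ∀ v ∈ U, ¬ G.Adj w v := by
    intro w hw v hv hadj
    rw [hFdef, Finset.mem_sdiff] at hw
    rw [hUdef, Finset.mem_union] at hv
    rcases hv with hv | hv
    · obtain ⟨j, hj, hvA⟩ := Finset.mem_biUnion.mp hv
      have := P1 j hj w hw.1 v hvA hadj
      exact hw.2 (Finset.mem_biUnion.mpr ⟨j, hj, this⟩)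
    · exact hJind w hw.1 v (hUBJ hv) hadj
  -- the 2-coloring
  obtain ⟨C⟩ := hZ
  set Wc : Fin 2 → Finset V :=
    fun i => U.filter (fun v => ∃ h : v ∈ ((↑Z : Set V)ᶜ), C ⟨v, h⟩ = i) with hWcdef
  have hWcU : ∀ i, Wc i ⊆ U := fun i => Finset.filter_subset _ _
  have hWcZ : ∀ i, ∀ v ∈ Wc i, v ∉ Z := by
    intro i v hv hvZ
    obtain ⟨h, -⟩ := (Finset.mem_filter.mp hv).2
    exact h (by exact_mod_cast hvZ)
  have hWcInd : ∀ i, IsIndep G (Wc i) := by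
    intro i u hu v hv hadj
    obtain ⟨hu1, hu2⟩ := (Finset.mem_filter.mp hu).2
    obtain ⟨hv1, hv2⟩ := (Finset.mem_filter.mp hv).2
    have hadj' : (G.induce ((↑Z : Set V)ᶜ)).Adj ⟨u, hu1⟩ ⟨v, hv1⟩ := hadj
    exact C.valid hadj' (by rw [hu2, hv2])
  have hcover : U \ Z ⊆ Wc 0 ∪ Wc 1 := by
    intro v hv
    rw [Finset.mem_sdiff] at hv
    have hvc : v ∈ ((↑Z : Set V)ᶜ) := by
      simp only [Set.mem_compl_iff, Finset.mem_coe]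
      exact fun h => hv.2 h
    have h2 : C ⟨v, hvc⟩ = 0 ∨ C ⟨v, hvc⟩ = 1 := by
      rcases (C ⟨v, hvc⟩) with ⟨n, hn⟩
      interval_cases n
      · exact Or.inl rfl
      · exact Or.inr rfl
    rcases h2 with h2 | h2
    · exact Finset.mem_union_left _ (Finset.mem_filter.mpr ⟨hv.1, hvc, h2⟩)
    · exact Finset.mem_union_right _ (Finset.mem_filter.mpr ⟨hv.1, hvc, h2⟩)
  have hsplit : (U \ Z).card ≤ (Wc 0).card + (Wc 1).card :=
    le_trans (Finset.card_le_card hcover) (Finset.card_union_le _ _)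
  -- take the bigger class
  obtain ⟨i, hi⟩ : ∃ i : Fin 2, (U \ Z).card ≤ 2 * (Wc i).card := by
    rcases le_total ((Wc 0).card) ((Wc 1).card) with h | h
    · exact ⟨1, by omega⟩
    · exact ⟨0, by omega⟩
  set W : Finset V := Wc i with hWdef
  -- final independent set
  set T : Finset V := F ∪ W with hTdef
  have hTdisj : Disjoint F W := by
    rw [Finset.disjoint_left]
    intro a ha hab
    have haU := hWcU i hab
    rw [hFdef, Finset.mem_sdiff] at ha
    rw [hUdef, Finset.mem_union] at haU
    rcases haU with h | h
    · exact hUAJ a h ha.1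
    · exact ha.2 h
  have hTind : IsIndep G T := by
    intro u hu v hv hadj
    rw [hTdef, Finset.mem_union] at hu hv
    rcases hu with hu | hu <;> rcases hv with hv | hv
    · exact hJind u (Finset.mem_sdiff.mp hu).1 v (Finset.mem_sdiff.mp hv).1 hadj
    · exact hFU u hu v (hWcU i hv) hadj
    · exact hFU v hv u (hWcU i hu) hadj.symm
    · exact hWcInd i u hu v hv hadj
  have hTcard : T.card = F.card + W.card := Finset.card_union_of_disjoint hTdisj
  have hTle : T.card ≤ alpha G := card_le_alpha G hTind
  have hUZ : U.card ≤ (U \ Z).card + Z.card := Finset.card_le_card_sdiff_add_card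
  omega

end VCKernel
end

section
/- Every minimal blocking set of a d-quasi-bipartite graph has size at most d + 2, and this bound is tight, witnessed by K_{d+2}. -/
/-!
Let `Y` be a minimal blocking set. The part of `Y` inside a connected component on which the
independence number drops is already blocking, so `Y` lies in a single component `C`, and by
minimality every `y ∈ Y` lies in a maximum independent set `J y` of `C` with `J y ∩ Y = {y}`.
Let `U` and `N` be the union and the intersection of the `J y`. Adding the sets one at a time,
the exchange set `(U ∩ J a) ∪ (N \ J a)` is independent and, once two sets are present, misses
`Y`, so it is smaller than `α(C)`; this gives `|U| + |N| ≥ 2 α(C) + |Y| - 2`. Conversely, for an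
odd cycle transversal `Z` of `C`, `N` together with the larger colour class of `(U \ N) \ Z` is
independent, so `|U| + |N| ≤ 2 α(C) + |Z|`. Hence `|Y| ≤ |Z| + 2`.
In `K_{d+2}` the independence number is `1` and drops only when every vertex is deleted.
-/

attribute [local instance] Classical.propDecidable

namespace VCKernel

variable {V : Type*} [Fintype V] [DecidableEq V]

section IndependentSets

variable {V : Type*} {G : SimpleGraph V}

lemma IsIndep.subset {S T : Finset V} (hT : IsIndep G T) (hST : S ⊆ T) : IsIndep G S :=
  fun u hu v hv => hT u (hST hu) v (hST hv)

lemma IsIndep.union [DecidableEq V] {S T : Finset V} (hS : IsIndep G S) (hT : IsIndep G T)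
    (hST : ∀ u ∈ S, ∀ v ∈ T, ¬ G.Adj u v) : IsIndep G (S ∪ T) := by
  intro u hu v hv
  rcases Finset.mem_union.1 hu with hu | hu <;> rcases Finset.mem_union.1 hv with hv | hv
  · exact hS u hu v hv
  · exact hST u hu v hv
  · exact fun h => hST v hv u hu h.symm
  · exact hT u hu v hv

lemma exists_isIndep_subset_card_le_mul {A : Set V} {k : ℕ}
    (hA : (G.induce A).Colorable k) {R : Finset V} (hR : ↑R ⊆ A) :
    ∃ B ⊆ R, IsIndep G B ∧ R.card ≤ k * B.card := by
  obtain rfl | ⟨r, hr⟩ := R.eq_empty_or_nonempty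
  · exact ⟨∅, subset_rfl, by simp [IsIndep], by simp⟩
  obtain ⟨c⟩ := hA
  let f : V → Fin k := fun v => if h : v ∈ A then c ⟨v, h⟩ else c ⟨r, hR hr⟩
  have hf {v : V} (hv : v ∈ A) : f v = c ⟨v, hv⟩ := dif_pos hv
  obtain ⟨i, -, hi⟩ := Finset.exists_max_image Finset.univ (fun i => (R.filter (f · = i)).card)
    ⟨f r, Finset.mem_univ _⟩
  refine ⟨R.filter (f · = i), Finset.filter_subset _ _, fun u hu v hv huv => ?_, ?_⟩
  · rw [Finset.mem_filter] at hu hv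
    exact c.valid (G := G.induce A) (v := ⟨u, hR hu.1⟩) (w := ⟨v, hR hv.1⟩) huv
      ((hf (hR hu.1)).symm.trans (hu.2.trans (hv.2.symm.trans (hf (hR hv.1)))))
  · simpa [mul_comm] using Finset.card_le_mul_card_image_of_maps_to
      (fun v _ => Finset.mem_univ (f v)) _ fun j _ => hi j (Finset.mem_univ j)

variable [Fintype V]

lemma bddAbove_indepCards (G : SimpleGraph V) (A : Set V) :
    BddAbove {n | ∃ S : Finset V, ↑S ⊆ A ∧ IsIndep G S ∧ S.card = n} := by
  refine ⟨Fintype.card V, ?_⟩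
  rintro _ ⟨S, -, -, rfl⟩
  exact S.card_le_univ

lemma exists_isIndep_card_eq_alphaOn (G : SimpleGraph V) (A : Set V) :
    ∃ S : Finset V, ↑S ⊆ A ∧ IsIndep G S ∧ S.card = alphaOn G A := by
  refine Nat.sSup_mem ?_ (bddAbove_indepCards G A)
  exact ⟨0, ∅, by simp [IsIndep]⟩

lemma card_le_alphaOn {A : Set V} {S : Finset V} (hSA : ↑S ⊆ A) (hS : IsIndep G S) :
    S.card ≤ alphaOn G A :=
  le_csSup (bddAbove_indepCards G A) ⟨S, hSA, hS, rfl⟩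

lemma alphaOn_union_of_forall_not_adj {A B : Set V} (hAB : Disjoint A B)
    (hno : ∀ u ∈ A, ∀ v ∈ B, ¬ G.Adj u v) :
    alphaOn G (A ∪ B) = alphaOn G A + alphaOn G B := by
  classical
  apply le_antisymm
  · obtain ⟨S, hS, hSind, hcard⟩ := exists_isIndep_card_eq_alphaOn G (A ∪ B)
    have hSA : ↑(S.filter (· ∈ A)) ⊆ A := fun v hv => (Finset.mem_filter.1 hv).2
    have hSB : ↑(S.filter (· ∉ A)) ⊆ B := fun v hv =>
      (hS (Finset.mem_filter.1 hv).1).resolve_left (Finset.mem_filter.1 hv).2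
    calc alphaOn G (A ∪ B) = (S.filter (· ∈ A)).card + (S.filter (· ∉ A)).card := by
          rw [Finset.card_filter_add_card_filter_not, hcard]
      _ ≤ alphaOn G A + alphaOn G B :=
          add_le_add (card_le_alphaOn hSA (hSind.subset (Finset.filter_subset _ _)))
            (card_le_alphaOn hSB (hSind.subset (Finset.filter_subset _ _)))
  · obtain ⟨SA, hSA, hSAind, hcardA⟩ := exists_isIndep_card_eq_alphaOn G A
    obtain ⟨SB, hSB, hSBind, hcardB⟩ := exists_isIndep_card_eq_alphaOn G B
    have hdisj : Disjoint SA SB := Finset.disjoint_coe.1 (hAB.mono hSA hSB)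
    calc alphaOn G A + alphaOn G B = (SA ∪ SB).card := by
          rw [Finset.card_union_of_disjoint hdisj, hcardA, hcardB]
      _ ≤ alphaOn G (A ∪ B) :=
          card_le_alphaOn (by push_cast; exact Set.union_subset_union hSA hSB)
            (hSAind.union hSBind fun u hu v hv => hno u (hSA hu) v (hSB hv))

end IndependentSets

section ClosedSets

variable {V : Type*} {G : SimpleGraph V}

def AdjClosed (G : SimpleGraph V) (C : Set V) : Prop :=
  ∀ u ∈ C, ∀ v, G.Adj u v → v ∈ C

lemma AdjClosed.compl {C : Set V} (hC : AdjClosed G C) : AdjClosed G Cᶜ :=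
  fun u hu v huv hv => hu (hC v hv u huv.symm)

lemma adjClosed_supp (c : G.ConnectedComponent) : AdjClosed G c.supp :=
  fun _ hu _ huv => c.mem_supp_of_adj_mem_supp hu huv

lemma isCompOf_supp (c : G.ConnectedComponent) : IsCompOf G Set.univ c.supp :=
  ⟨Set.subset_univ _, c.connected_toSimpleGraph,
    fun u hu v _ huv => adjClosed_supp c u hu v huv⟩

variable [Fintype V] {C : Set V}

lemma AdjClosed.alphaOn_univ_diff (hC : AdjClosed G C) (Y : Set V) :
    alphaOn G (Set.univ \ Y) = alphaOn G (C \ Y) + alphaOn G (Cᶜ \ Y) := by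
  rw [← alphaOn_union_of_forall_not_adj
    (disjoint_compl_right.mono Set.sdiff_subset Set.sdiff_subset)
    fun u hu v hv huv => hv.1 (hC u hu.1 v huv)]
  congr 1
  ext v
  by_cases v ∈ C <;> simp_all

lemma AdjClosed.alpha_eq (hC : AdjClosed G C) : alpha G = alphaOn G C + alphaOn G Cᶜ := by
  simpa [alpha] using hC.alphaOn_univ_diff ∅

lemma AdjClosed.isBlocking_iff (hC : AdjClosed G C) {Y : Finset V} (hYC : ↑Y ⊆ C) :
    IsBlocking G Y ↔ alphaOn G (C \ Y) < alphaOn G C := by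
  have hout : Cᶜ \ (Y : Set V) = Cᶜ :=
    sdiff_eq_left.2 (disjoint_compl_left.mono_right hYC)
  rw [IsBlocking, hC.alpha_eq, hC.alphaOn_univ_diff, hout, Nat.add_lt_add_iff_right]

lemma AdjClosed.isBlocking_filter [DecidablePred (· ∈ C)] (hC : AdjClosed G C) {Y : Finset V}
    (hY : alphaOn G (C \ Y) < alphaOn G C) : IsBlocking G (Y.filter (· ∈ C)) := by
  have hin : C \ ↑(Y.filter (· ∈ C)) = C \ Y := by ext v; by_cases v ∈ C <;> simp_all
  rw [hC.isBlocking_iff fun v hv => (Finset.mem_filter.1 hv).2, hin]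
  exact hY

lemma IsBlocking.lt_or_lt (hC : AdjClosed G C) {Y : Finset V} (hY : IsBlocking G Y) :
    alphaOn G (C \ Y) < alphaOn G C ∨ alphaOn G (Cᶜ \ Y) < alphaOn G Cᶜ := by
  have := hC.alphaOn_univ_diff Y
  rw [IsBlocking, hC.alpha_eq] at hY
  omega

lemma IsMinBlocking.subset_of_adjClosed (hC : AdjClosed G C) {Y : Finset V} (hY : IsMinBlocking G Y)
    {y : V} (hy : y ∈ Y) (hyC : y ∈ C) : ↑Y ⊆ C := by
  rcases hY.1.lt_or_lt hC with hin | hout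
  · have : Y.filter (· ∈ C) = Y := by
      by_contra hne
      exact hY.2 _ (Finset.filter_subset _ _ |>.ssubset_of_ne hne) (hC.isBlocking_filter hin)
    exact fun v hv => Finset.filter_eq_self.1 this v hv
  · exact absurd (hC.compl.isBlocking_filter hout)
      (hY.2 _ (Finset.filter_ssubset.2 ⟨y, hy, fun h => h hyC⟩))

end ClosedSets

section MaxIndepSets

variable {V : Type*} [DecidableEq V] {G : SimpleGraph V} {A : Set V} {Y : Finset V}

structure IsMaxIndepMeeting (G : SimpleGraph V) (A : Set V) (Y : Finset V) (y : V) (J : Finset V) :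
    Prop where
  subset : ↑J ⊆ A
  isIndep : IsIndep G J
  card_eq : J.card = alphaOn G A
  inter_eq : J ∩ Y = {y}

lemma IsMaxIndepMeeting.eq_of_mem {y v : V} {J : Finset V} (hJ : IsMaxIndepMeeting G A Y y J)
    (hvJ : v ∈ J) (hvY : v ∈ Y) : v = y :=
  Finset.mem_singleton.1 (hJ.inter_eq ▸ Finset.mem_inter.2 ⟨hvJ, hvY⟩)

variable [Fintype V]

lemma exists_isMaxIndepMeeting {y : V} (hY : alphaOn G (A \ Y) < alphaOn G A)
    (hy : alphaOn G A ≤ alphaOn G (A \ ↑(Y.erase y))) : ∃ J, IsMaxIndepMeeting G A Y y J := by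
  obtain ⟨S, hSA, hS, hcard⟩ := exists_isIndep_card_eq_alphaOn G (A \ ↑(Y.erase y))
  have hSA' : ↑S ⊆ A := hSA.trans Set.sdiff_subset
  have honly : ∀ v ∈ S, v ∈ Y → v = y := fun v hv hvY =>
    by_contra fun hne => (hSA hv).2 (Finset.mem_erase.2 ⟨hne, hvY⟩)
  obtain ⟨v, hvS, hvY⟩ : ∃ v ∈ S, v ∈ Y := by
    by_contra! h
    have := card_le_alphaOn (A := A \ Y) (fun v hv => ⟨hSA' hv, h v hv⟩) hS
    omega
  obtain rfl := honly v hvS hvY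
  refine ⟨S, hSA', hS, le_antisymm (card_le_alphaOn hSA' hS) (hcard ▸ hy), ?_⟩
  ext w
  simp only [Finset.mem_inter, Finset.mem_singleton]
  exact ⟨fun h => honly w h.1 h.2, by rintro rfl; exact ⟨hvS, hvY⟩⟩

lemma IsMinBlocking.exists_isMaxIndepMeeting {C : Set V} (hY : IsMinBlocking G Y)
    (hC : AdjClosed G C) (hYC : ↑Y ⊆ C) {y : V} (hy : y ∈ Y) :
    ∃ J, IsMaxIndepMeeting G C Y y J := by
  refine VCKernel.exists_isMaxIndepMeeting ((hC.isBlocking_iff hYC).1 hY.1) (not_lt.1 fun h => ?_)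
  have hsub : ↑(Y.erase y) ⊆ C := (Finset.coe_subset.2 (Y.erase_subset y)).trans hYC
  exact hY.2 _ (Finset.erase_ssubset hy) ((hC.isBlocking_iff hsub).2 h)

end MaxIndepSets

def exchange {α : Type*} [DecidableEq α] (U N J : Finset α) : Finset α := U ∩ J ∪ N \ J

lemma card_union_add_card_inter_add_card_exchange {α : Type*} [DecidableEq α]
    (U N J : Finset α) :
    (J ∪ U).card + (J ∩ N).card + (exchange U N J).card = J.card + U.card + N.card := by
  have hdisj : Disjoint (U ∩ J) (N \ J) :=
    Finset.disjoint_of_subset_left Finset.inter_subset_right Finset.disjoint_sdiff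
  rw [exchange, Finset.card_union_of_disjoint hdisj, Finset.inter_comm U J]
  have := Finset.card_union_add_card_inter J U
  have := Finset.card_inter_add_card_sdiff N J
  rw [Finset.inter_comm N J] at this
  omega

section Exchange

variable {V : Type*} [Fintype V] [DecidableEq V] {G : SimpleGraph V} {A : Set V} {Y : Finset V}
  {J : V → Finset V} {a : V} {s : Finset V}

lemma not_adj_of_mem_sup_of_mem_inf (hs : ∀ y ∈ s, IsIndep G (J y)) {u v : V}
    (hu : u ∈ s.sup J) (hv : v ∈ s.inf J) : ¬ G.Adj u v := by
  obtain ⟨y, hy, huy⟩ := Finset.mem_sup.1 hu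
  exact hs y hy u huy v (Finset.mem_inf.1 hv y hy)

lemma exchange_subset_and_isIndep (hJ : ∀ y ∈ Y, IsMaxIndepMeeting G A Y y (J y))
    (hs : s.Nonempty) (hsY : s ⊆ Y) (haY : a ∈ Y) :
    ↑(exchange (s.sup J) (s.inf J) (J a)) ⊆ A ∧
      IsIndep G (exchange (s.sup J) (s.inf J) (J a)) := by
  obtain ⟨b, hb⟩ := hs
  have hinf : s.inf J ⊆ J b := Finset.inf_le hb
  refine ⟨fun v hv => ?_, ?_⟩
  · rcases Finset.mem_union.1 hv with hv | hv
    · exact (hJ a haY).subset (Finset.mem_inter.1 hv).2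
    · exact (hJ b (hsY hb)).subset (hinf (Finset.mem_sdiff.1 hv).1)
  · refine ((hJ a haY).isIndep.subset Finset.inter_subset_right).union
      ((hJ b (hsY hb)).isIndep.subset (Finset.sdiff_subset.trans hinf)) fun u hu v hv => ?_
    exact not_adj_of_mem_sup_of_mem_inf (fun y hy => (hJ y (hsY hy)).isIndep)
      (Finset.mem_inter.1 hu).1 (Finset.mem_sdiff.1 hv).1

lemma disjoint_exchange (hJ : ∀ y ∈ Y, IsMaxIndepMeeting G A Y y (J y)) (ha : a ∉ s)
    (hs : 1 < s.card) (hsY : s ⊆ Y) (haY : a ∈ Y) :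
    Disjoint (exchange (s.sup J) (s.inf J) (J a)) Y := by
  obtain ⟨b, hb, c, hc, hbc⟩ := Finset.one_lt_card.1 hs
  refine Finset.disjoint_left.2 fun v hv hvY => ?_
  rcases Finset.mem_union.1 hv with hv | hv
  · obtain ⟨y, hy, hvy⟩ := Finset.mem_sup.1 (Finset.mem_inter.1 hv).1
    have hva : v = a := (hJ a haY).eq_of_mem (Finset.mem_inter.1 hv).2 hvY
    exact ha (hva ▸ (hJ y (hsY hy)).eq_of_mem hvy hvY ▸ hy)
  · have hv := Finset.mem_inf.1 (Finset.mem_sdiff.1 hv).1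
    exact hbc (((hJ b (hsY hb)).eq_of_mem (hv b hb) hvY).symm.trans
      ((hJ c (hsY hc)).eq_of_mem (hv c hc) hvY))

/-- The truncated `S.card - 2` lets the induction start at singletons, where the union and the
intersection are both `J a`. -/
theorem two_mul_alphaOn_add_card_sub_two_le (hJ : ∀ y ∈ Y, IsMaxIndepMeeting G A Y y (J y))
    (hY : alphaOn G (A \ Y) < alphaOn G A) {S : Finset V} (hS : S.Nonempty) (hSY : S ⊆ Y) :
    2 * alphaOn G A + (S.card - 2) ≤ (S.sup J).card + (S.inf J).card := by
  induction hS using Finset.Nonempty.cons_induction with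
  | singleton a => simp [(hJ a (hSY (Finset.mem_singleton_self a))).card_eq, two_mul]
  | cons a s ha hs ih =>
    have hsY : s ⊆ Y := (Finset.subset_cons ha).trans hSY
    have haY : a ∈ Y := hSY (Finset.mem_cons_self a s)
    obtain ⟨hTA, hT⟩ := exchange_subset_and_isIndep hJ hs hsY haY
    have hle := card_le_alphaOn hTA hT
    have hlt (h : 1 < s.card) := (card_le_alphaOn (Set.subset_sdiff.2
      ⟨hTA, Finset.disjoint_coe.2 (disjoint_exchange hJ ha h hsY haY)⟩) hT).trans_lt hY
    have hcount := card_union_add_card_inter_add_card_exchange (s.sup J) (s.inf J) (J a)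
    rw [(hJ a haY).card_eq] at hcount
    rw [Finset.sup_cons, Finset.inf_cons, Finset.sup_eq_union, Finset.inf_eq_inter,
      Finset.card_cons]
    have := ih hsY
    by_cases h : 1 < s.card
    · have := hlt h
      omega
    · omega

theorem card_sup_add_card_inf_le (hJ : ∀ y ∈ Y, IsMaxIndepMeeting G A Y y (J y))
    (hY : Y.Nonempty) {Z : Finset V} (hcol : (G.induce (A \ ↑Z)).Colorable 2) :
    (Y.sup J).card + (Y.inf J).card ≤ 2 * alphaOn G A + Z.card := by
  obtain ⟨y₀, hy₀⟩ := hY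
  set U := Y.sup J
  set N := Y.inf J
  have hUA : ↑U ⊆ A := fun v hv => by
    obtain ⟨y, hy, hvy⟩ := Finset.mem_sup.1 hv
    exact (hJ y hy).subset hvy
  have hN : N ⊆ J y₀ := Finset.inf_le hy₀
  have hR : ↑((U \ N) \ Z) ⊆ A \ ↑Z := fun v hv => by
    simp only [Finset.coe_sdiff, Set.mem_sdiff, Finset.mem_coe] at hv
    exact ⟨hUA hv.1.1, hv.2⟩
  obtain ⟨B, hBR, hB, hRB⟩ := exists_isIndep_subset_card_le_mul hcol hR
  have hBU : B ⊆ U \ N := hBR.trans Finset.sdiff_subset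
  have hNB : IsIndep G (N ∪ B) :=
    ((hJ y₀ hy₀).isIndep.subset hN).union hB fun u hu v hv huv =>
      not_adj_of_mem_sup_of_mem_inf (fun y hy => (hJ y hy).isIndep)
        (Finset.mem_sdiff.1 (hBU hv)).1 hu huv.symm
  have hNBA : ↑(N ∪ B) ⊆ A := by
    rw [Finset.coe_union]
    exact Set.union_subset (Finset.coe_subset.2 hN |>.trans (hJ y₀ hy₀).subset)
      (Finset.coe_subset.2 (hBU.trans Finset.sdiff_subset) |>.trans hUA)
  have hNBcard := card_le_alphaOn hNBA hNB
  rw [Finset.card_union_of_disjoint (Finset.disjoint_of_subset_right hBU Finset.disjoint_sdiff)]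
    at hNBcard
  have := Finset.le_card_sdiff Z (U \ N)
  have := Finset.le_card_sdiff N U
  omega

theorem card_le_card_add_two_of_colorable (hJ : ∀ y ∈ Y, IsMaxIndepMeeting G A Y y (J y))
    (hY : alphaOn G (A \ Y) < alphaOn G A) (hYne : Y.Nonempty) {Z : Finset V}
    (hcol : (G.induce (A \ ↑Z)).Colorable 2) : Y.card ≤ Z.card + 2 := by
  have := two_mul_alphaOn_add_card_sub_two_le hJ hY hYne subset_rfl
  have := card_sup_add_card_inf_le hJ hYne hcol
  omega

end Exchange

theorem IsMinBlocking.card_le_of_quasiBipartite {V : Type*} [Fintype V] [DecidableEq V]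
    {G : SimpleGraph V} {Y : Finset V} {d : ℕ} (hG : QuasiBipartite G d)
    (hY : IsMinBlocking G Y) : Y.card ≤ d + 2 := by
  rcases Y.eq_empty_or_nonempty with hY₀ | ⟨y₀, hy₀⟩
  · simp [hY₀]
  set c := G.connectedComponentMk y₀
  have hYc : ↑Y ⊆ c.supp := hY.subset_of_adjClosed (adjClosed_supp c) hy₀ rfl
  have hJ (y : V) (hy : y ∈ Y) := hY.exists_isMaxIndepMeeting (adjClosed_supp c) hYc hy
  choose! J hJ using hJ
  obtain ⟨Z, hZ, hcol⟩ := hG c.supp (isCompOf_supp c)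
  have := card_le_card_add_two_of_colorable hJ (((adjClosed_supp c).isBlocking_iff hYc).1 hY.1)
    ⟨y₀, hy₀⟩ hcol
  omega

section CompleteGraph

variable {V : Type*}

lemma isIndep_top_iff {S : Finset V} : IsIndep (⊤ : SimpleGraph V) S ↔ S.card ≤ 1 := by
  simp [IsIndep, Finset.card_le_one]

variable [Fintype V]

lemma alphaOn_empty (G : SimpleGraph V) : alphaOn G ∅ = 0 := by
  obtain ⟨S, hS, -, hcard⟩ := exists_isIndep_card_eq_alphaOn G ∅
  rw [← hcard, Finset.card_eq_zero, ← Finset.coe_eq_empty]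
  exact Set.subset_empty_iff.1 hS

lemma alphaOn_top {A : Set V} (hA : A.Nonempty) : alphaOn ⊤ A = 1 := by
  obtain ⟨S, -, hS, hcard⟩ := exists_isIndep_card_eq_alphaOn ⊤ A
  obtain ⟨a, ha⟩ := hA
  have := card_le_alphaOn (G := ⊤) (S := {a}) (by simpa) (isIndep_top_iff.2 (by simp))
  rw [isIndep_top_iff] at hS
  simp only [Finset.card_singleton] at this
  omega

lemma isMinBlocking_top_univ [Nonempty V] : IsMinBlocking (⊤ : SimpleGraph V) Finset.univ := by
  refine ⟨?_, fun Y hY => ?_⟩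
  · rw [IsBlocking, alpha, alphaOn_top Set.univ_nonempty, Finset.coe_univ, Set.sdiff_self,
      alphaOn_empty]
    exact one_pos
  · obtain ⟨v, -, hv⟩ := Finset.exists_of_ssubset hY
    have hne : (Set.univ \ (Y : Set V)).Nonempty := ⟨v, Set.mem_univ v, hv⟩
    rw [IsBlocking, alpha, alphaOn_top Set.univ_nonempty, alphaOn_top hne]
    exact lt_irrefl 1

lemma quasiBipartite_top {d : ℕ} (hV : Fintype.card V ≤ d + 2) :
    QuasiBipartite (⊤ : SimpleGraph V) d := by
  classical
  intro C _
  obtain ⟨Z, -, hZ⟩ := Finset.exists_subset_card_eq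
    (s := (Finset.univ : Finset V)) (n := Fintype.card V - 2) (by simp)
  refine ⟨Z, by omega, ?_⟩
  have hcol : ((⊤ : SimpleGraph V).induce ((Zᶜ : Finset V) : Set V)).Colorable 2 :=
    (SimpleGraph.colorable_of_fintype _).mono (by
      simp only [Finset.coe_sort_coe, Fintype.card_coe, Finset.card_compl, hZ]
      omega)
  exact hcol.of_hom (SimpleGraph.induceHomOfLE _ fun v hv => by simpa using hv.2).toHom

end CompleteGraph

/-- Every minimal blocking set of a `d`-quasi-bipartite graph has size at most
`d + 2`, and this bound is tight, witnessed by `K_{d+2}`. -/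
theorem stmt9 (d : ℕ) :
    (∀ (W : Type) [Fintype W] [DecidableEq W] (G : SimpleGraph W)
        (Y : Finset W), QuasiBipartite G d → IsMinBlocking G Y →
          Y.card ≤ d + 2) ∧
    QuasiBipartite (⊤ : SimpleGraph (Fin (d+2))) d ∧
    IsMinBlocking (⊤ : SimpleGraph (Fin (d+2))) Finset.univ ∧
    (Finset.univ : Finset (Fin (d+2))).card = d + 2 :=
  ⟨fun _ _ _ _ _ hG hY => hY.card_le_of_quasiBipartite hG, quasiBipartite_top (by simp),
    isMinBlocking_top_univ, by simp⟩

end VCKernel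
end
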